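/- Let I be a 3-CNF instance with m clauses and n variables, let ε ∈ (0,1), and let J be the {0,1}-action linear influence game constructed from I and ε as described. Then the number of pure-strategy Nash equilibria of J equals the number of satisfying truth assignments of I; indeed, a joint action x of J is a PSNE if and only if every clause player plays 1 in x and the variable players' actions, read as a truth assignment, satisfy I. -/

import Mathlib

open Finset

/-- A pure-strategy Nash equilibrium of a `{0,1}`-action linear influence game. -/
def IsPSNE01 {P : Type*} [Fintype P] [DecidableEq P]
    (w : P → P → ℝ) (b : P → ℝ) (x : P → ℝ) : Prop :=
  (∀ p, x p = 0 ∨ x p = 1) ∧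
    ∀ p, (2 * x p - 1) * ((∑ q ∈ univ.filter (· ≠ p), w q p * x q) - b p) ≥ 0

/-- Weights of the `{0,1}`-action LIG built from a 3-CNF instance. -/
def threeSatW (n m : ℕ) (V : Fin m → Finset (Fin n)) (l : Fin m → Fin n → ℝ) :
    Fin m ⊕ Fin n → Fin m ⊕ Fin n → ℝ
  | Sum.inl k, Sum.inr i => if i ∈ V k then 1 - 2 * l k i else 0
  | Sum.inr i, Sum.inl k => if i ∈ V k then 2 * l k i - 1 else 0
  | _, _ => 0

/-- Thresholds of the `{0,1}`-action LIG built from a 3-CNF instance. -/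
def threeSatB (n m : ℕ) (V : Fin m → Finset (Fin n)) (l : Fin m → Fin n → ℝ) (ε : ℝ) :
    Fin m ⊕ Fin n → ℝ
  | Sum.inl k => 1 - ε - ∑ i ∈ V k, (1 - l k i)
  | Sum.inr i => ∑ k ∈ univ.filter (fun k => i ∈ V k), (1 - 2 * l k i)

/-!
For `x` with values in `{0,1}`, the net input of clause player `k` is
(number of literals of clause `k` made true by `x`) − 1 + ε. Since `0 < ε < 1` it never vanishes,
so clause player `k` best-responds iff it plays `1` exactly when its clause is satisfied. Granting
this, the payoff term `(2xᵢ − 1)·(net input)` of variable player `i` equals minus the number of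
unsatisfied clauses containing `i`, so in an equilibrium every clause is satisfied; conversely, when
all clause players play `1` the net inputs of the variable players vanish.
-/

def netInput {P : Type*} [Fintype P] [DecidableEq P]
    (w : P → P → ℝ) (b : P → ℝ) (x : P → ℝ) (p : P) : ℝ :=
  (∑ q ∈ univ.filter (· ≠ p), w q p * x q) - b p

theorem isPSNE01_iff {P : Type*} [Fintype P] [DecidableEq P]
    (w : P → P → ℝ) (b : P → ℝ) (x : P → ℝ) :
    IsPSNE01 w b x ↔
      (∀ p, x p = 0 ∨ x p = 1) ∧ ∀ p, 0 ≤ (2 * x p - 1) * netInput w b x p :=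
  Iff.rfl

theorem sum_filter_ne_eq_sum {P M : Type*} [Fintype P] [DecidableEq P] [AddCommMonoid M]
    {p : P} {f : P → M} (hf : f p = 0) : ∑ q ∈ univ.filter (· ≠ p), f q = ∑ q, f q := by
  rw [filter_ne', sum_erase _ hf]

theorem zero_le_two_mul_sub_one_mul_iff {a d : ℝ} (ha : a = 0 ∨ a = 1) (hd : d ≠ 0) :
    0 ≤ (2 * a - 1) * d ↔ (a = 1 ↔ 0 < d) := by
  rcases ha with rfl | rfl
  · norm_num
  · norm_num
    exact hd.symm.le_iff_lt

theorem two_mul_sub_one_mul_add_one_sub {a y : ℝ} (ha : a = 0 ∨ a = 1) (hy : y = 0 ∨ y = 1) :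
    (2 * a - 1) * y + (1 - a) = if y = a then 1 else 0 := by
  rcases ha with rfl | rfl <;> rcases hy with rfl | rfl <;> norm_num

section ThreeSatGame

variable {n m : ℕ} {V : Fin m → Finset (Fin n)} {l : Fin m → Fin n → ℝ} {ε : ℝ}
  {x : Fin m ⊕ Fin n → ℝ}

theorem netInput_clause (hl : ∀ k i, l k i = 0 ∨ l k i = 1) (hx : ∀ p, x p = 0 ∨ x p = 1)
    (k : Fin m) :
    netInput (threeSatW n m V l) (threeSatB n m V l ε) x (Sum.inl k)
      = #{i ∈ V k | x (Sum.inr i) = l k i} - 1 + ε := by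
  have hlit : ∀ i ∈ V k, (2 * l k i - 1) * x (Sum.inr i) + (1 - l k i)
      = if x (Sum.inr i) = l k i then 1 else 0 :=
    fun i _ => two_mul_sub_one_mul_add_one_sub (hl k i) (hx _)
  rw [netInput, sum_filter_ne_eq_sum (by simp [threeSatW]), Fintype.sum_sum_type]
  simp only [threeSatW, threeSatB, ite_mul, zero_mul, sum_const_zero, zero_add, sum_ite_mem,
    univ_inter, natCast_card_filter, ← sum_congr rfl hlit, sum_add_distrib]
  ring

theorem netInput_variable (i : Fin n) :
    netInput (threeSatW n m V l) (threeSatB n m V l ε) x (Sum.inr i)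
      = ∑ k with i ∈ V k, (1 - 2 * l k i) * (x (Sum.inl k) - 1) := by
  rw [netInput, sum_filter_ne_eq_sum (by simp [threeSatW]), Fintype.sum_sum_type]
  simp only [threeSatW, threeSatB, ite_mul, zero_mul, sum_const_zero, add_zero, ← sum_filter,
    ← sum_sub_distrib]
  exact sum_congr rfl fun k _ => by ring

theorem clause_best_response_iff (hl : ∀ k i, l k i = 0 ∨ l k i = 1) (hε0 : 0 < ε)
    (hε1 : ε < 1) (hx : ∀ p, x p = 0 ∨ x p = 1) (k : Fin m) :
    0 ≤ (2 * x (Sum.inl k) - 1) * netInput (threeSatW n m V l) (threeSatB n m V l ε) x (Sum.inl k)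
      ↔ (x (Sum.inl k) = 1 ↔ ∃ i ∈ V k, x (Sum.inr i) = l k i) := by
  set c := #{i ∈ V k | x (Sum.inr i) = l k i}
  have hc : (c : ℝ) - 1 + ε ≠ 0 ∧ (0 < (c : ℝ) - 1 + ε ↔ 0 < c) := by
    rcases Nat.eq_zero_or_pos c with hc0 | hcpos
    · simp only [hc0, Nat.cast_zero, lt_self_iff_false, iff_false]
      constructor <;> linarith
    · have : (1 : ℝ) ≤ c := by exact_mod_cast hcpos
      exact ⟨by linarith, iff_of_true (by linarith) hcpos⟩
  rw [netInput_clause hl hx, zero_le_two_mul_sub_one_mul_iff (hx _) hc.1, hc.2, card_pos,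
    filter_nonempty_iff]

/-- Best-responding clause players play `0` exactly on unsatisfied clauses, and each of these
costs every variable player occurring in it one unit, whatever that player plays. -/
theorem variable_payoff_of_clause_best_response (hl : ∀ k i, l k i = 0 ∨ l k i = 1)
    (hx : ∀ p, x p = 0 ∨ x p = 1)
    (hclause : ∀ k, x (Sum.inl k) = 1 ↔ ∃ i ∈ V k, x (Sum.inr i) = l k i) (i : Fin n) :
    (2 * x (Sum.inr i) - 1) * netInput (threeSatW n m V l) (threeSatB n m V l ε) x (Sum.inr i)
      = -#{k | i ∈ V k ∧ x (Sum.inl k) = 0} := by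
  rw [netInput_variable, mul_sum, ← filter_filter, natCast_card_filter, ← sum_neg_distrib]
  refine sum_congr rfl fun k hk => ?_
  rcases hx (Sum.inl k) with hk0 | hk1
  · have hne : x (Sum.inr i) ≠ l k i := fun h =>
      zero_ne_one (hk0.symm.trans ((hclause k).2 ⟨i, (mem_filter.1 hk).2, h⟩))
    rw [hk0, if_pos rfl]
    rcases hl k i with h | h <;> rcases hx (Sum.inr i) with h' | h' <;>
      simp only [h, h', ne_eq, not_true_eq_false] at hne ⊢ <;> norm_num
  · simp [hk1]

theorem isPSNE01_threeSat_iff (hV : ∀ k, (V k).Nonempty) (hl : ∀ k i, l k i = 0 ∨ l k i = 1)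
    (hε0 : 0 < ε) (hε1 : ε < 1) (hx : ∀ p, x p = 0 ∨ x p = 1) :
    IsPSNE01 (threeSatW n m V l) (threeSatB n m V l ε) x ↔
      (∀ k, x (Sum.inl k) = 1) ∧ ∀ k, ∃ i ∈ V k, x (Sum.inr i) = l k i := by
  rw [isPSNE01_iff]
  constructor
  · rintro ⟨-, hbest⟩
    have hclause k := (clause_best_response_iff hl hε0 hε1 hx k).1 (hbest _)
    have hplays (k : Fin m) : x (Sum.inl k) = 1 := by
      refine (hx _).resolve_left fun hk0 => ?_
      obtain ⟨i, hi⟩ := hV k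
      have hvar := hbest (Sum.inr i)
      rw [variable_payoff_of_clause_best_response hl hx hclause] at hvar
      have hpos : 0 < #{k | i ∈ V k ∧ x (Sum.inl k) = 0} := card_pos.2 ⟨k, by simp [hi, hk0]⟩
      have : (0 : ℝ) < #{k | i ∈ V k ∧ x (Sum.inl k) = 0} := by exact_mod_cast hpos
      linarith
    exact ⟨hplays, fun k => (hclause k).1 (hplays k)⟩
  · rintro ⟨hplays, hsat⟩
    have hclause k := iff_of_true (hplays k) (hsat k)
    refine ⟨hx, ?_⟩
    rintro (k | i)
    · exact (clause_best_response_iff hl hε0 hε1 hx k).2 (hclause k)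
    · rw [variable_payoff_of_clause_best_response hl hx hclause]
      simp [hplays]

def psneEquivSatisfying (hV : ∀ k, (V k).Nonempty) (hl : ∀ k i, l k i = 0 ∨ l k i = 1)
    (hε0 : 0 < ε) (hε1 : ε < 1) :
    {x // IsPSNE01 (threeSatW n m V l) (threeSatB n m V l ε) x} ≃
      {t : Fin n → ℝ // (∀ i, t i = 0 ∨ t i = 1) ∧ ∀ k, ∃ i ∈ V k, t i = l k i} where
  toFun x :=
    ⟨x.1 ∘ Sum.inr, fun _ => x.2.1 _, ((isPSNE01_threeSat_iff hV hl hε0 hε1 x.2.1).1 x.2).2⟩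
  invFun t := ⟨Sum.elim 1 t.1, (isPSNE01_threeSat_iff hV hl hε0 hε1
    (Sum.rec (fun _ => Or.inr rfl) t.2.1)).2 ⟨fun _ => rfl, t.2.2⟩⟩
  left_inv x := Subtype.ext <| funext <| Sum.rec
    (fun k => (((isPSNE01_threeSat_iff hV hl hε0 hε1 x.2.1).1 x.2).1 k).symm) fun _ => rfl
  right_inv _ := rfl

end ThreeSatGame

/-- A `{0,1}` joint action of the LIG built from a 3-CNF instance is a PSNE iff
every clause player plays 1 and the variable players' actions, read as a truth assignment,
satisfy the instance; consequently the number of PSNE of the game equals the number of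
satisfying truth assignments. -/
theorem threeSat_lig_psne_count (n m : ℕ)
    (V : Fin m → Finset (Fin n)) (hV : ∀ k, (V k).card = 3)
    (l : Fin m → Fin n → ℝ) (hl : ∀ k i, l k i = 0 ∨ l k i = 1)
    (ε : ℝ) (hε0 : 0 < ε) (hε1 : ε < 1) :
    (∀ x : Fin m ⊕ Fin n → ℝ, (∀ p, x p = 0 ∨ x p = 1) →
        (IsPSNE01 (threeSatW n m V l) (threeSatB n m V l ε) x ↔
          (∀ k : Fin m, x (Sum.inl k) = 1) ∧
            ∀ k : Fin m, ∃ i ∈ V k, x (Sum.inr i) = l k i)) ∧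
    Nat.card {x : Fin m ⊕ Fin n → ℝ //
        IsPSNE01 (threeSatW n m V l) (threeSatB n m V l ε) x}
      = Nat.card {t : Fin n → ℝ //
          (∀ i, t i = 0 ∨ t i = 1) ∧ ∀ k, ∃ i ∈ V k, t i = l k i} := by
  have hV' (k : Fin m) : (V k).Nonempty := card_pos.1 (by rw [hV k]; norm_num)
  exact ⟨fun _ => isPSNE01_threeSat_iff hV' hl hε0 hε1,
    Nat.card_congr (psneEquivSatisfying hV' hl hε0 hε1)⟩
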